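/- In U = U_q(sp₄) the following four identities hold: (E_{β₃}E_{β₁})*E_{β₂} = q²E_{β₃}*E_{β₂}E_{β₁}* + q²E_{β₃}*E_{β₃} − [2]_q E_{β₂}*E_{β₂}; (E_{β₄}E_{β₁})*E_{β₃} = q²E_{β₄}*E_{β₃}E_{β₁}* + [2]_q q²E_{β₄}*E_{β₄} − q²E_{β₃}*E_{β₃}; (E_{β₃}E_{β₁})*E_{β₃}E_{β₁} = E_{β₃}*E_{β₃}E_{β₁}*E_{β₁} + [2]_q(E_{β₃}*E_{β₄}E_{β₁} − E_{β₂}*E_{β₃}E_{β₁}); (E_{β₄}E_{β₁})*E_{β₄}E_{β₁} = E_{β₄}*E_{β₄}E_{β₁}*E_{β₁} − q²E_{β₃}*E_{β₄}E_{β₁}. -/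

import Mathlib

noncomputable section

open scoped TensorProduct RealInnerProductSpace

/-- The quantum integer `[n]_q = (q^n - q^(-n))/(q - q⁻¹)`. -/
def qnum (q : ℝ) (n : ℤ) : ℝ := (q ^ n - q ^ (-n)) / (q - q⁻¹)

/-- Generators of `U_q(sp₄)` inside an arbitrary ℝ-algebra `U`, together with the
defining relations of the presented algebra `U_q(sp₄)`. -/
structure Sp4Gens (q : ℝ) (U : Type) [Ring U] [Algebra ℝ U] : Type where
  E1 : U
  E2 : U
  F1 : U
  F2 : U
  K1 : U
  K1i : U
  K2 : U
  K2i : U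
  relK1 : K1 * K1i = 1
  relK1' : K1i * K1 = 1
  relK2 : K2 * K2i = 1
  relK2' : K2i * K2 = 1
  relK12 : K1 * K2 = K2 * K1
  relK12i : K1 * K2i = K2i * K1
  relK1i2 : K1i * K2 = K2 * K1i
  relK1i2i : K1i * K2i = K2i * K1i
  relK1E1 : K1 * E1 = (q ^ (2 : ℤ)) • (E1 * K1)
  relK1E2 : K1 * E2 = (q ^ (-2 : ℤ)) • (E2 * K1)
  relK2E1 : K2 * E1 = (q ^ (-2 : ℤ)) • (E1 * K2)
  relK2E2 : K2 * E2 = (q ^ (4 : ℤ)) • (E2 * K2)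
  relK1F1 : K1 * F1 = (q ^ (-2 : ℤ)) • (F1 * K1)
  relK1F2 : K1 * F2 = (q ^ (2 : ℤ)) • (F2 * K1)
  relK2F1 : K2 * F1 = (q ^ (2 : ℤ)) • (F1 * K2)
  relK2F2 : K2 * F2 = (q ^ (-4 : ℤ)) • (F2 * K2)
  relE1F1 : E1 * F1 - F1 * E1 = (q - q⁻¹)⁻¹ • (K1 - K1i)
  relE2F2 : E2 * F2 - F2 * E2 = (q ^ (2 : ℤ) - q ^ (-2 : ℤ))⁻¹ • (K2 - K2i)
  relE1F2 : E1 * F2 = F2 * E1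
  relE2F1 : E2 * F1 = F1 * E2
  serreE1 : E1 ^ 3 * E2 - qnum q 3 • (E1 ^ 2 * E2 * E1) + qnum q 3 • (E1 * E2 * E1 ^ 2)
      - E2 * E1 ^ 3 = 0
  serreE2 : E2 ^ 2 * E1 - (q ^ (2 : ℤ) + q ^ (-2 : ℤ)) • (E2 * E1 * E2) + E1 * E2 ^ 2 = 0
  serreF1 : F1 ^ 3 * F2 - qnum q 3 • (F1 ^ 2 * F2 * F1) + qnum q 3 • (F1 * F2 * F1 ^ 2)
      - F2 * F1 ^ 3 = 0
  serreF2 : F2 ^ 2 * F1 - (q ^ (2 : ℤ) + q ^ (-2 : ℤ)) • (F2 * F1 * F2) + F1 * F2 ^ 2 = 0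

variable {q : ℝ} {U : Type} [Ring U] [Algebra ℝ U]

/-- The quantum root vector `E_{β₁} = E₁`. -/
def Eb1 (g : Sp4Gens q U) : U := g.E1

/-- The quantum root vector `E_{β₂}`. -/
def Eb2 (g : Sp4Gens q U) : U :=
  (qnum q 2)⁻¹ • (g.E1 ^ 2 * g.E2) - q⁻¹ • (g.E1 * g.E2 * g.E1)
    + (q ^ (-2 : ℤ) * (qnum q 2)⁻¹) • (g.E2 * g.E1 ^ 2)

/-- The quantum root vector `E_{β₃}`. -/
def Eb3 (g : Sp4Gens q U) : U := g.E1 * g.E2 - (q ^ (-2 : ℤ)) • (g.E2 * g.E1)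

/-- The quantum root vector `E_{β₄} = E₂`. -/
def Eb4 (g : Sp4Gens q U) : U := g.E2

/-- `E_{β₁}* = F₁K₁`, the image of `E_{β₁}` under the star anti-automorphism
(the star is the unique ℝ-linear anti-automorphism with `Eᵢ* = FᵢKᵢ`, `Fᵢ* = Kᵢ⁻¹Eᵢ`,
`Kᵢ* = Kᵢ`; on the elements below its value is forced by anti-multiplicativity). -/
def sEb1 (g : Sp4Gens q U) : U := g.F1 * g.K1

/-- `E_{β₂}*`, the image of `E_{β₂}` under the star anti-automorphism. -/
def sEb2 (g : Sp4Gens q U) : U :=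
  (qnum q 2)⁻¹ • (g.F2 * g.K2 * (g.F1 * g.K1) ^ 2)
    - q⁻¹ • (g.F1 * g.K1 * (g.F2 * g.K2) * (g.F1 * g.K1))
    + (q ^ (-2 : ℤ) * (qnum q 2)⁻¹) • ((g.F1 * g.K1) ^ 2 * (g.F2 * g.K2))

/-- `E_{β₃}*`, the image of `E_{β₃}` under the star anti-automorphism. -/
def sEb3 (g : Sp4Gens q U) : U :=
  g.F2 * g.K2 * (g.F1 * g.K1) - (q ^ (-2 : ℤ)) • (g.F1 * g.K1 * (g.F2 * g.K2))

/-- `E_{β₄}* = F₂K₂`, the image of `E_{β₄}` under the star anti-automorphism. -/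
def sEb4 (g : Sp4Gens q U) : U := g.F2 * g.K2

/-- The quantized Levi factor `U_q(𝔩)`, i.e. the unital subalgebra generated by
`E₁, F₁, K₁, K₁⁻¹, K₂, K₂⁻¹`. -/
def Uql (g : Sp4Gens q U) : Subalgebra ℝ U :=
  Algebra.adjoin ℝ {g.E1, g.F1, g.K1, g.K1i, g.K2, g.K2i}

/-!
Write `x = E_{β₁}* = F₁K₁`. Both sides are compared by moving `x` to the right through the
other factors, using five commutation rules. On the `E` side,
`x E₂ = q⁻² E₂ x`, `x E_{β₃} = E_{β₃} x + [2] E₂` and `x E_{β₂} = q² E_{β₂} x + q² E_{β₃}`;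
these follow from `[E₁, F₁] = (K₁ - K₁⁻¹)/(q - q⁻¹)`, the `K`-weights of `E₁, E₂`, and
`[2] E_{β₂} = [E₁, E_{β₃}]`. On the starred side, `x E_{β₄}* = q² E_{β₄}* x - q² E_{β₃}*` and
`x E_{β₃}* = E_{β₃}* x - [2] E_{β₂}*` are just the definitions of `E_{β₃}*` and `E_{β₂}*`.
-/
theorem mul_mul_of_mul_eq {R : Type*} [Semigroup R] {a b c : R} (h : a * b = c) (x : R) :
    a * (b * x) = c * x := by
  rw [← mul_assoc, h]

theorem qnum_two {q : ℝ} (hq : q - q⁻¹ ≠ 0) : qnum q 2 = q + q⁻¹ := by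
  have hq0 : q ≠ 0 := by rintro rfl; simp at hq
  rw [qnum, div_eq_iff hq]
  simp only [zpow_neg, zpow_ofNat]
  field_simp
  ring

theorem qnum_two_ne_zero {q : ℝ} (hq : q - q⁻¹ ≠ 0) : qnum q 2 ≠ 0 := by
  have hq0 : q ≠ 0 := by rintro rfl; simp at hq
  rw [qnum_two hq]
  intro h
  have : q ^ 2 + 1 = 0 := by field_simp at h; linarith
  nlinarith [sq_nonneg q]

theorem qnum_two_smul_eq_commutator {A : Type*} [Ring A] [Algebra ℝ A] {q : ℝ} (hq : q - q⁻¹ ≠ 0)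
    (x y : A) :
    qnum q 2 • ((qnum q 2)⁻¹ • (x ^ 2 * y) - q⁻¹ • (x * y * x)
        + (q ^ (-2 : ℤ) * (qnum q 2)⁻¹) • (y * x ^ 2))
      = x * (x * y - q ^ (-2 : ℤ) • (y * x)) - (x * y - q ^ (-2 : ℤ) • (y * x)) * x := by
  have hq0 : q ≠ 0 := by rintro rfl; simp at hq
  rw [qnum_two hq]
  simp only [pow_two, smul_add, smul_sub, mul_sub, sub_mul, mul_smul_comm, smul_mul_assoc,
    smul_smul, mul_assoc, zpow_neg, zpow_ofNat]
  match_scalars <;> field_simp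
  ring

namespace Sp4Gens

variable (g : Sp4Gens q U)

theorem sEb1_mul_E2 : sEb1 g * g.E2 = q ^ (-2 : ℤ) • (g.E2 * sEb1 g) := by
  rw [sEb1, mul_assoc, g.relK1E2, mul_smul_comm, ← mul_assoc, ← g.relE2F1, mul_assoc]

theorem sEb1_mul_E1 :
    sEb1 g * g.E1
      = q ^ (2 : ℤ) • (g.E1 * sEb1 g) - (q ^ (2 : ℤ) * (q - q⁻¹)⁻¹) • (g.K1 * g.K1 - 1) := by
  have hF : g.F1 * g.E1 = g.E1 * g.F1 - (q - q⁻¹)⁻¹ • (g.K1 - g.K1i) := by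
    rw [← g.relE1F1, sub_sub_cancel]
  rw [sEb1, mul_assoc, g.relK1E1, mul_smul_comm, ← mul_assoc, hF, sub_mul, smul_mul_assoc, sub_mul,
    g.relK1', mul_assoc]
  module

theorem K1_mul_Eb3 (hq : q ≠ 0) : g.K1 * Eb3 g = Eb3 g * g.K1 := by
  simp only [Eb3, mul_sub, sub_mul, mul_smul_comm, smul_mul_assoc, mul_assoc,
    mul_mul_of_mul_eq g.relK1E1, mul_mul_of_mul_eq g.relK1E2, g.relK1E1, g.relK1E2, smul_smul]
  rw [← zpow_add₀ hq, mul_comm, ← zpow_add₀ hq]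
  norm_num

theorem K1_mul_K1_mul_Eb3 (hq : q ≠ 0) : g.K1 * (g.K1 * Eb3 g) = Eb3 g * (g.K1 * g.K1) := by
  rw [g.K1_mul_Eb3 hq, ← mul_assoc, g.K1_mul_Eb3 hq, mul_assoc]

theorem sEb1_mul_Eb3 (hq : q ≠ 0) : sEb1 g * Eb3 g = Eb3 g * sEb1 g + qnum q 2 • g.E2 := by
  simp only [Eb3, mul_sub, sub_mul, mul_smul_comm, smul_mul_assoc, mul_assoc, smul_sub, smul_smul,
    mul_mul_of_mul_eq g.sEb1_mul_E1, mul_mul_of_mul_eq g.sEb1_mul_E2, g.sEb1_mul_E1, g.sEb1_mul_E2,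
    mul_mul_of_mul_eq g.relK1E2, g.relK1E2, one_mul, mul_one]
  match_scalars <;> simp only [qnum, div_eq_mul_inv, zpow_neg, zpow_ofNat] <;> field_simp
  ring

theorem qnum_two_smul_Eb2 (hq : q - q⁻¹ ≠ 0) :
    qnum q 2 • Eb2 g = g.E1 * Eb3 g - Eb3 g * g.E1 :=
  qnum_two_smul_eq_commutator hq g.E1 g.E2

theorem sEb3_eq : sEb3 g = sEb4 g * sEb1 g - q ^ (-2 : ℤ) • (sEb1 g * sEb4 g) := rfl

theorem sEb2_eq :
    sEb2 g = (qnum q 2)⁻¹ • (sEb4 g * sEb1 g ^ 2) - q⁻¹ • (sEb1 g * sEb4 g * sEb1 g)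
      + (q ^ (-2 : ℤ) * (qnum q 2)⁻¹) • (sEb1 g ^ 2 * sEb4 g) := rfl

-- `E_{β₂}*` is `E_{β₂}` with all products reversed, so the identity for `E_{β₂}` read in `Uᵐᵒᵖ`.
theorem qnum_two_smul_sEb2 (hq : q - q⁻¹ ≠ 0) :
    qnum q 2 • sEb2 g = sEb3 g * sEb1 g - sEb1 g * sEb3 g := by
  have := congrArg MulOpposite.unop
    (qnum_two_smul_eq_commutator hq (MulOpposite.op (sEb1 g)) (MulOpposite.op (sEb4 g)))
  simp only [MulOpposite.unop_smul, MulOpposite.unop_sub, MulOpposite.unop_add,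
    MulOpposite.unop_mul, MulOpposite.unop_pow, MulOpposite.unop_op, mul_assoc] at this
  rw [sEb2_eq, sEb3_eq]
  simpa only [mul_assoc] using this

theorem sEb1_mul_Eb2 (hq : q - q⁻¹ ≠ 0) :
    sEb1 g * Eb2 g = q ^ (2 : ℤ) • (Eb2 g * sEb1 g) + q ^ (2 : ℤ) • Eb3 g := by
  have hq0 : q ≠ 0 := by rintro rfl; simp at hq
  have hE12 : g.E1 * g.E2 = Eb3 g + q ^ (-2 : ℤ) • (g.E2 * g.E1) := by rw [Eb3, sub_add_cancel]
  have key : sEb1 g * (g.E1 * Eb3 g - Eb3 g * g.E1)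
      = q ^ (2 : ℤ) • ((g.E1 * Eb3 g - Eb3 g * g.E1) * sEb1 g)
        + (q ^ (2 : ℤ) * qnum q 2) • Eb3 g := by
    simp only [mul_sub, sub_mul, mul_smul_comm, smul_mul_assoc, mul_assoc, smul_sub, smul_add,
      smul_smul, mul_mul_of_mul_eq g.sEb1_mul_E1, mul_mul_of_mul_eq (g.sEb1_mul_Eb3 hq0),
      g.sEb1_mul_E1, g.sEb1_mul_Eb3 hq0, add_mul, mul_add, g.K1_mul_K1_mul_Eb3 hq0, one_mul,
      mul_one, hE12]
    match_scalars <;> simp only [qnum, div_eq_mul_inv, zpow_neg, zpow_ofNat] <;> field_simp <;>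
      ring
  apply smul_right_injective U (qnum_two_ne_zero hq)
  calc qnum q 2 • (sEb1 g * Eb2 g) = sEb1 g * (qnum q 2 • Eb2 g) := (mul_smul_comm _ _ _).symm
    _ = q ^ (2 : ℤ) • ((qnum q 2 • Eb2 g) * sEb1 g) + (q ^ (2 : ℤ) * qnum q 2) • Eb3 g := by
      rw [qnum_two_smul_Eb2 g hq, key]
    _ = qnum q 2 • (q ^ (2 : ℤ) • (Eb2 g * sEb1 g) + q ^ (2 : ℤ) • Eb3 g) := by
      rw [smul_mul_assoc]
      module

theorem sEb1_mul_sEb4 (hq : q ≠ 0) :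
    sEb1 g * sEb4 g = q ^ (2 : ℤ) • (sEb4 g * sEb1 g) - q ^ (2 : ℤ) • sEb3 g := by
  rw [sEb3_eq, smul_sub, smul_smul, ← zpow_add₀ hq]
  simp

theorem sEb1_mul_sEb3 (hq : q - q⁻¹ ≠ 0) :
    sEb1 g * sEb3 g = sEb3 g * sEb1 g - qnum q 2 • sEb2 g := by
  rw [qnum_two_smul_sEb2 g hq, sub_sub_cancel]

end Sp4Gens

/-- the four identities of Lemma 7.2 (rewriting products such as
`(E_{β₃}E_{β₁})* E_{β₂}`; note `(E_{β₃}E_{β₁})* = E_{β₁}* E_{β₃}*`). -/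
theorem rewriting_relations (hq0 : 0 < q) (hq1 : q < 1) (g : Sp4Gens q U) :
    sEb1 g * sEb3 g * Eb2 g
        = (q ^ (2 : ℤ)) • (sEb3 g * Eb2 g * sEb1 g) + (q ^ (2 : ℤ)) • (sEb3 g * Eb3 g)
          - qnum q 2 • (sEb2 g * Eb2 g) ∧
      sEb1 g * sEb4 g * Eb3 g
        = (q ^ (2 : ℤ)) • (sEb4 g * Eb3 g * sEb1 g)
          + (qnum q 2 * q ^ (2 : ℤ)) • (sEb4 g * Eb4 g)
          - (q ^ (2 : ℤ)) • (sEb3 g * Eb3 g) ∧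
      sEb1 g * sEb3 g * (Eb3 g * Eb1 g)
        = sEb3 g * Eb3 g * (sEb1 g * Eb1 g)
          + qnum q 2 • (sEb3 g * Eb4 g * Eb1 g - sEb2 g * Eb3 g * Eb1 g) ∧
      sEb1 g * sEb4 g * (Eb4 g * Eb1 g)
        = sEb4 g * Eb4 g * (sEb1 g * Eb1 g) - (q ^ (2 : ℤ)) • (sEb3 g * Eb4 g * Eb1 g) := by
  have hq : q - q⁻¹ ≠ 0 := (sub_neg.2 (hq1.trans ((one_lt_inv₀ hq0).2 hq1))).ne
  have hq' : q ≠ 0 := hq0.ne'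
  refine ⟨?_, ?_, ?_, ?_⟩
  · rw [g.sEb1_mul_sEb3 hq, sub_mul, mul_assoc, g.sEb1_mul_Eb2 hq]
    simp only [mul_add, mul_smul_comm, smul_mul_assoc, mul_assoc]
  · rw [g.sEb1_mul_sEb4 hq', sub_mul, smul_mul_assoc, mul_assoc, g.sEb1_mul_Eb3 hq']
    simp only [Eb4, mul_add, mul_smul_comm, smul_mul_assoc, mul_assoc]
    module
  · rw [g.sEb1_mul_sEb3 hq, sub_mul, mul_assoc, ← mul_assoc (sEb1 g), g.sEb1_mul_Eb3 hq']
    simp only [Eb4, add_mul, mul_add, smul_sub, mul_smul_comm, smul_mul_assoc, mul_assoc]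
    module
  · rw [g.sEb1_mul_sEb4 hq', sub_mul, smul_mul_assoc, mul_assoc, Eb4, ← mul_assoc (sEb1 g),
      g.sEb1_mul_E2]
    simp only [Eb1, mul_smul_comm, smul_mul_assoc, mul_assoc, smul_smul]
    rw [← zpow_add₀ hq']
    norm_num
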